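/- For N ≥ 2, the function ρ_N satisfies: (i) ρ_N(r) → +∞ as r → 0⁺; (ii) ρ_N(r) → +∞ as r → +∞; (iii) if N ≥ 3, then r ρ_N(r) → N−2 as r → 0⁺; (iv) if N = 2, then r log(1/r) ρ_2(r) → 1 as r → 0⁺. -/

import Mathlib

open MeasureTheory Filter

/-- `ρ_N(r) = r^{1−N} e^{−r²/2} / ∫_r^{+∞} t^{1−N} e^{−t²/2} dt`. -/
noncomputable def rho (N : ℕ) (r : ℝ) : ℝ :=
  (r ^ (1 - (N : ℝ)) * Real.exp (-r ^ 2 / 2)) /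
    ∫ t in Set.Ioi r, t ^ (1 - (N : ℝ)) * Real.exp (-t ^ 2 / 2)

/-!
Write `I_a(r) = gaussTail a r = ∫_r^∞ t^a e^{-t²/2} dt`. Integration by parts against
`t^c e^{-t²/2}` gives `I_{c+1}(r) = r^c e^{-r²/2} + c I_{c-1}(r)` for every real `c`. For `c = 0`
this reads `I_1(r) = e^{-r²/2}`, and `t^{1-N} ≤ r^{-N} t` on `(r, ∞)` then yields `ρ_N(r) ≥ r`.
For `c = 2 - N ≤ -1` the term `I_{3-N}(r) = O(r^{3-N})` is negligible against `r^{2-N}` as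
`r → 0⁺`, so `(N - 2) I_{1-N}(r) ~ r^{2-N}`. For `N = 2` one has instead
`I_{-1}(r) = log(1/r) + O(1)`, since `1 - t²/2 ≤ e^{-t²/2} ≤ 1` on `(0, 1]`.
The blow-up at `0⁺` follows from these two equivalents.
-/

open Real Set Topology Asymptotics

lemma tendsto_div_of_abs_sub_le {α : Type*} {l : Filter α} {f g : α → ℝ} {C : ℝ}
    (hfg : ∀ᶠ x in l, |f x - g x| ≤ C) (hg : Tendsto g l atTop) :
    Tendsto (fun x => f x / g x) l (𝓝 1) := by
  have hbig : (fun x => f x - g x) =O[l] fun _ => (1 : ℝ) :=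
    IsBigO.of_bound C (hfg.mono fun x hx => by simpa using hx)
  have hequiv : f ~[l] g :=
    hbig.trans_isLittleO ((isLittleO_one_left_iff ℝ).2 (tendsto_norm_atTop_atTop.comp hg))
  exact (isEquivalent_iff_tendsto_one (hg.eventually_ne_atTop 0)).1 hequiv

noncomputable def gaussTail (a r : ℝ) : ℝ := ∫ t in Ioi r, t ^ a * exp (-t ^ 2 / 2)

lemma rpow_le_rpow_sub_mul_rpow {a b r t : ℝ} (hab : a ≤ b) (hr : 0 < r) (hrt : r ≤ t) :
    t ^ a ≤ r ^ (a - b) * t ^ b := by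
  have ht : 0 < t := hr.trans_le hrt
  calc t ^ a = t ^ (a - b) * t ^ b := by rw [← rpow_add ht, sub_add_cancel]
    _ ≤ r ^ (a - b) * t ^ b :=
      mul_le_mul_of_nonneg_right (rpow_le_rpow_of_nonpos hr hrt (sub_nonpos.2 hab)) (by positivity)

lemma neg_sq_div_two (t : ℝ) : -t ^ 2 / 2 = -2⁻¹ * t ^ 2 := by ring

lemma integrable_exp_neg_sq_div_two : Integrable fun t : ℝ => exp (-t ^ 2 / 2) := by
  simpa only [neg_sq_div_two] using integrable_exp_neg_mul_sq (b := 2⁻¹) (by norm_num)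

lemma integrableOn_rpow_mul_exp_neg_sq_div_two (a : ℝ) {r : ℝ} (hr : 0 < r) :
    IntegrableOn (fun t => t ^ a * exp (-t ^ 2 / 2)) (Ioi r) := by
  have hdom := ((integrableOn_rpow_mul_exp_neg_mul_sq (b := 2⁻¹) (by norm_num)
    (by linarith [abs_nonneg a] : -1 < |a|)).mono_set (Ioi_subset_Ioi hr.le)).const_mul
    (r ^ (a - |a|))
  simp only [← neg_sq_div_two] at hdom
  refine hdom.mono' ?_ ?_
  · refine ContinuousOn.aestronglyMeasurable (fun t ht => ?_) measurableSet_Ioi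
    exact ((continuousAt_rpow_const t a (.inl (hr.trans ht).ne')).mul
      (by fun_prop)).continuousWithinAt
  · filter_upwards [ae_restrict_mem measurableSet_Ioi] with t ht
    have ht0 : 0 < t := hr.trans ht
    rw [norm_of_nonneg (by positivity), ← mul_assoc]
    gcongr
    exact rpow_le_rpow_sub_mul_rpow (le_abs_self a) hr ht.le

lemma gaussTail_pos (a : ℝ) {r : ℝ} (hr : 0 < r) : 0 < gaussTail a r := by
  have hpos : ∀ t ∈ Ioi r, 0 < t ^ a * exp (-t ^ 2 / 2) := fun t ht =>
    mul_pos (rpow_pos_of_pos (hr.trans ht) a) (exp_pos _)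
  have hsupp : Ioi r ⊆ Function.support fun t => t ^ a * exp (-t ^ 2 / 2) :=
    fun t ht => (hpos t ht).ne'
  rw [gaussTail, setIntegral_pos_iff_support_of_nonneg_ae
    ((ae_restrict_mem measurableSet_Ioi).mono fun t ht => (hpos t ht).le)
    (integrableOn_rpow_mul_exp_neg_sq_div_two a hr),
    inter_eq_right.2 hsupp, volume_Ioi]
  exact ENNReal.zero_lt_top

lemma gaussTail_le_rpow_sub_mul {a b r : ℝ} (hab : a ≤ b) (hr : 0 < r) :
    gaussTail a r ≤ r ^ (a - b) * gaussTail b r := by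
  rw [gaussTail, gaussTail, ← integral_const_mul]
  refine setIntegral_mono_on (integrableOn_rpow_mul_exp_neg_sq_div_two a hr)
    ((integrableOn_rpow_mul_exp_neg_sq_div_two b hr).const_mul _) measurableSet_Ioi
    fun t ht => ?_
  rw [← mul_assoc]
  exact mul_le_mul_of_nonneg_right (rpow_le_rpow_sub_mul_rpow hab hr ht.le) (exp_pos _).le

lemma gaussTail_zero_le (r : ℝ) : gaussTail 0 r ≤ ∫ t, exp (-t ^ 2 / 2) := by
  simp only [gaussTail, rpow_zero, one_mul]
  exact setIntegral_le_integral integrable_exp_neg_sq_div_two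
    (Eventually.of_forall fun t => (exp_pos _).le)

lemma tendsto_rpow_mul_exp_neg_sq_div_two_atTop (c : ℝ) :
    Tendsto (fun t => t ^ c * exp (-t ^ 2 / 2)) atTop (𝓝 0) := by
  simpa only [neg_sq_div_two] using (rpow_mul_exp_neg_mul_sq_isLittleO_exp_neg
    (b := 2⁻¹) (by norm_num) c).tendsto_zero_of_tendsto
    (tendsto_exp_atBot.comp (tendsto_id.const_mul_atTop_of_neg (by norm_num)))

lemma hasDerivAt_rpow_mul_exp_neg_sq_div_two (c : ℝ) {t : ℝ} (ht : 0 < t) :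
    HasDerivAt (fun t => t ^ c * exp (-t ^ 2 / 2))
      (c * (t ^ (c - 1) * exp (-t ^ 2 / 2)) - t ^ (c + 1) * exp (-t ^ 2 / 2)) t := by
  have hexp : HasDerivAt (fun t : ℝ => -t ^ 2 / 2) (-t) t :=
    (((hasDerivAt_pow 2 t).neg).div_const 2).congr_deriv (by norm_num; ring)
  refine ((hasDerivAt_rpow_const (p := c) (.inl ht.ne')).mul hexp.exp).congr_deriv ?_
  rw [rpow_add_one ht.ne']
  ring

lemma gaussTail_add_one (c : ℝ) {r : ℝ} (hr : 0 < r) :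
    gaussTail (c + 1) r = r ^ c * exp (-r ^ 2 / 2) + c * gaussTail (c - 1) r := by
  have hint := fun a => integrableOn_rpow_mul_exp_neg_sq_div_two a hr
  have := integral_Ioi_of_hasDerivAt_of_tendsto'
    (fun t ht => hasDerivAt_rpow_mul_exp_neg_sq_div_two c (hr.trans_le ht))
    (((hint (c - 1)).const_mul c).sub (hint (c + 1)))
    (tendsto_rpow_mul_exp_neg_sq_div_two_atTop c)
  rw [integral_sub ((hint (c - 1)).const_mul c) (hint (c + 1)), integral_const_mul] at this
  rw [gaussTail, gaussTail]
  linarith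

lemma gaussTail_one {r : ℝ} (hr : 0 < r) : gaussTail 1 r = exp (-r ^ 2 / 2) := by
  simpa using gaussTail_add_one 0 hr

lemma tendsto_exp_neg_sq_div_two_nhdsGT_zero :
    Tendsto (fun r : ℝ => exp (-r ^ 2 / 2)) (𝓝[>] 0) (𝓝 1) := by
  have hcont : Continuous fun r : ℝ => exp (-r ^ 2 / 2) := by fun_prop
  simpa using (hcont.tendsto 0).mono_left nhdsWithin_le_nhds

lemma tendsto_rpow_div_gaussTail_nhdsGT_zero {c : ℝ} (hc : c ≤ -1) :
    Tendsto (fun r => r ^ c / gaussTail (c - 1) r) (𝓝[>] 0) (𝓝 (-c)) := by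
  set M := ∫ t, exp (-t ^ 2 / 2)
  have hq : Tendsto (fun r => gaussTail (c + 1) r / r ^ c) (𝓝[>] 0) (𝓝 0) := by
    have hbound : Tendsto (fun r => M * r) (𝓝[>] 0) (𝓝 0) := by
      simpa using ((continuous_const_mul M).tendsto 0).mono_left nhdsWithin_le_nhds
    refine squeeze_zero' ?_ ?_ hbound
    · filter_upwards [self_mem_nhdsWithin] with r hr
      exact div_nonneg (gaussTail_pos _ hr).le (rpow_nonneg hr.le _)
    · filter_upwards [self_mem_nhdsWithin] with r (hr : 0 < r)
      rw [div_le_iff₀ (rpow_pos_of_pos hr c)]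
      calc gaussTail (c + 1) r ≤ r ^ (c + 1 - 0) * gaussTail 0 r :=
            gaussTail_le_rpow_sub_mul (by linarith) hr
        _ ≤ r ^ (c + 1) * M := by
            rw [sub_zero]
            exact mul_le_mul_of_nonneg_left (gaussTail_zero_le r) (rpow_nonneg hr.le _)
        _ = M * r * r ^ c := by rw [rpow_add_one hr.ne']; ring
  have hlim := tendsto_const_nhds (x := -c) |>.div
    (tendsto_exp_neg_sq_div_two_nhdsGT_zero.sub hq) (by norm_num)
  rw [sub_zero, div_one] at hlim
  refine hlim.congr' ?_
  filter_upwards [self_mem_nhdsWithin] with r (hr : 0 < r)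
  have hrec := gaussTail_add_one c hr
  have hden :
      exp (-r ^ 2 / 2) - gaussTail (c + 1) r / r ^ c = -c * gaussTail (c - 1) r / r ^ c := by
    rw [hrec]
    field_simp
    ring
  show -c / (exp (-r ^ 2 / 2) - gaussTail (c + 1) r / r ^ c) = r ^ c / gaussTail (c - 1) r
  have hc0 : c ≠ 0 := (by linarith : c < 0).ne
  rw [hden]
  field_simp

lemma tendsto_mul_log_one_div_nhdsGT_zero :
    Tendsto (fun r : ℝ => r * log (1 / r)) (𝓝[>] 0) (𝓝[>] 0) := by
  refine tendsto_nhdsWithin_iff.2 ⟨?_, ?_⟩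
  · have := (continuous_mul_log.tendsto 0).neg.mono_left (nhdsWithin_le_nhds (s := Ioi 0))
    simpa [log_inv] using this
  · filter_upwards [Ioo_mem_nhdsGT one_pos] with r hr
    exact mul_pos hr.1 (log_pos ((one_lt_div hr.1).2 hr.2))

lemma gaussTail_neg_one_sub_mem_Icc {r : ℝ} (hr0 : 0 < r) (hr1 : r ≤ 1) :
    gaussTail (-1) r - gaussTail (-1) 1 ∈ Icc (log (1 / r) - 1 / 2) (log (1 / r)) := by
  have hne : ∀ t ∈ uIcc r 1, t ≠ 0 := fun t ht =>
    (hr0.trans_le (uIcc_of_le hr1 ▸ ht).1).ne'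
  have hcont : ContinuousOn (fun t => t ^ (-1 : ℝ) * exp (-t ^ 2 / 2)) (uIcc r 1) :=
    ((continuousOn_id.rpow_const fun t ht => .inl (hne t ht)).mul (by fun_prop))
  have hinv : IntervalIntegrable (fun t : ℝ => t⁻¹) volume r 1 :=
    intervalIntegral.intervalIntegrable_inv hne continuousOn_id
  have hlog : ∫ t in r..1, t⁻¹ = log (1 / r) := integral_inv_of_pos hr0 one_pos
  rw [gaussTail, gaussTail, intervalIntegral.integral_Ioi_sub_Ioi
    (integrableOn_rpow_mul_exp_neg_sq_div_two _ hr0) hr1]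
  constructor
  · calc log (1 / r) - 1 / 2 ≤ log (1 / r) - (1 - r) / 2 := by linarith
      _ = ∫ t in r..1, (t⁻¹ - 1 / 2) := by
          rw [intervalIntegral.integral_sub hinv intervalIntegrable_const, hlog,
            intervalIntegral.integral_const, smul_eq_mul]
          ring
      _ ≤ ∫ t in r..1, t ^ (-1 : ℝ) * exp (-t ^ 2 / 2) := by
          refine intervalIntegral.integral_mono_on hr1 (hinv.sub intervalIntegrable_const)
            hcont.intervalIntegrable fun t ht => ?_
          have ht0 : 0 < t := hr0.trans_le ht.1
          rw [rpow_neg_one]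
          calc t⁻¹ - 1 / 2 ≤ t⁻¹ - t / 2 := by linarith [ht.2]
            _ = t⁻¹ * (-t ^ 2 / 2 + 1) := by field_simp; ring
            _ ≤ t⁻¹ * exp (-t ^ 2 / 2) := by gcongr; exact add_one_le_exp _
  · rw [← hlog]
    refine intervalIntegral.integral_mono_on hr1 hcont.intervalIntegrable hinv fun t ht => ?_
    have ht0 : 0 < t := hr0.trans_le ht.1
    rw [rpow_neg_one]
    exact mul_le_of_le_one_right (inv_pos.2 ht0).le (exp_le_one_iff.2 (by nlinarith))

lemma tendsto_gaussTail_neg_one_div_log :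
    Tendsto (fun r => gaussTail (-1) r / log (1 / r)) (𝓝[>] 0) (𝓝 1) := by
  refine tendsto_div_of_abs_sub_le (C := gaussTail (-1) 1 + 1 / 2) ?_ ?_
  · filter_upwards [Ioo_mem_nhdsGT one_pos] with r hr
    have hI := gaussTail_pos (-1) one_pos
    obtain ⟨hlo, hhi⟩ := gaussTail_neg_one_sub_mem_Icc hr.1 hr.2.le
    exact abs_le.2 ⟨by linarith, by linarith⟩
  · simpa [Function.comp_def] using tendsto_log_atTop.comp tendsto_inv_nhdsGT_zero

lemma rho_eq_exp_mul (N : ℕ) (r : ℝ) :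
    rho N r = exp (-r ^ 2 / 2) * (r ^ (1 - (N : ℝ)) / gaussTail (1 - N) r) := by
  rw [rho, gaussTail, mul_comm, mul_div_assoc]

lemma self_le_rho (N : ℕ) {r : ℝ} (hr : 0 < r) : r ≤ rho N r := by
  have hI := gaussTail_le_rpow_sub_mul (by linarith [N.cast_nonneg (α := ℝ)] :
    1 - (N : ℝ) ≤ 1) hr
  rw [gaussTail_one hr, rpow_sub_one hr.ne'] at hI
  rw [rho, ← gaussTail, le_div_iff₀ (gaussTail_pos _ hr)]
  calc r * gaussTail (1 - N) r ≤ r * (r ^ (1 - (N : ℝ)) / r * exp (-r ^ 2 / 2)) :=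
        mul_le_mul_of_nonneg_left hI hr.le
    _ = r ^ (1 - (N : ℝ)) * exp (-r ^ 2 / 2) := by field_simp

lemma tendsto_rho_atTop (N : ℕ) : Tendsto (rho N) atTop atTop :=
  tendsto_atTop_mono' atTop ((eventually_gt_atTop 0).mono fun _ hr => self_le_rho N hr) tendsto_id

lemma tendsto_mul_rho_nhdsGT_zero {N : ℕ} (hN : 3 ≤ N) :
    Tendsto (fun r => r * rho N r) (𝓝[>] 0) (𝓝 ((N : ℝ) - 2)) := by
  have hc : (2 : ℝ) - N ≤ -1 := by
    have : (3 : ℝ) ≤ N := by exact_mod_cast hN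
    linarith
  have h := tendsto_exp_neg_sq_div_two_nhdsGT_zero.mul (tendsto_rpow_div_gaussTail_nhdsGT_zero hc)
  rw [one_mul, neg_sub, show (2 : ℝ) - N - 1 = 1 - N by ring] at h
  refine h.congr' ?_
  filter_upwards [self_mem_nhdsWithin] with r (hr : 0 < r)
  rw [rho_eq_exp_mul, show (2 : ℝ) - N = 1 + (1 - N) by ring, rpow_add hr, rpow_one]
  ring

lemma tendsto_mul_log_mul_rho_two :
    Tendsto (fun r => r * log (1 / r) * rho 2 r) (𝓝[>] 0) (𝓝 1) := by
  have h := tendsto_exp_neg_sq_div_two_nhdsGT_zero.mul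
    (tendsto_gaussTail_neg_one_div_log.inv₀ one_ne_zero)
  rw [inv_one, one_mul] at h
  refine h.congr' ?_
  filter_upwards [self_mem_nhdsWithin] with r (hr : 0 < r)
  rw [rho_eq_exp_mul, show 1 - ((2 : ℕ) : ℝ) = -1 by norm_num, rpow_neg_one, inv_div]
  field_simp

lemma tendsto_rho_nhdsGT_zero {N : ℕ} (hN : 2 ≤ N) : Tendsto (rho N) (𝓝[>] 0) atTop := by
  rcases hN.eq_or_lt with rfl | hN
  · refine (tendsto_mul_log_mul_rho_two.pos_mul_atTop one_pos
      tendsto_mul_log_one_div_nhdsGT_zero.inv_tendsto_nhdsGT_zero).congr' ?_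
    filter_upwards [Ioo_mem_nhdsGT one_pos] with r hr
    have : 0 < log (1 / r) := log_pos ((one_lt_div hr.1).2 hr.2)
    simp only [Pi.inv_apply]
    field_simp [hr.1.ne']
  · have hpos : (0 : ℝ) < N - 2 := by
      have : (3 : ℝ) ≤ N := by exact_mod_cast hN
      linarith
    refine ((tendsto_mul_rho_nhdsGT_zero hN).pos_mul_atTop hpos tendsto_inv_nhdsGT_zero).congr' ?_
    filter_upwards [self_mem_nhdsWithin] with r (hr : 0 < r)
    field_simp

/-- Asymptotic behaviour of `ρ_N`: it blows up at `0⁺` and at `+∞`; moreover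
`r ρ_N(r) → N−2` as `r → 0⁺` when `N ≥ 3`, and `r log(1/r) ρ_2(r) → 1` as
`r → 0⁺` when `N = 2`. -/
theorem rho_asymptotics (N : ℕ) (hN : 2 ≤ N) :
    Tendsto (rho N) (nhdsWithin 0 (Set.Ioi 0)) atTop ∧
    Tendsto (rho N) atTop atTop ∧
    (3 ≤ N →
      Tendsto (fun r => r * rho N r) (nhdsWithin 0 (Set.Ioi 0)) (nhds ((N : ℝ) - 2))) ∧
    (N = 2 →
      Tendsto (fun r => r * Real.log (1 / r) * rho N r) (nhdsWithin 0 (Set.Ioi 0))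
        (nhds 1)) :=
  ⟨tendsto_rho_nhdsGT_zero hN, tendsto_rho_atTop N, tendsto_mul_rho_nhdsGT_zero,
    fun h => h ▸ tendsto_mul_log_mul_rho_two⟩
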